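/- arXiv:1805.06613 — 12 statements merged into one kernel-verified Lean document; each statement's English description precedes it below -/
import Mathlib

section
/- Fix a real number c > 0 and define f : (0,1) → ℝ by f(t) = (1 + c - (1 !_t c + 1 !_{1-t} c)) / (t(1-t)), where x !_t y = ((1-t)x⁻¹ + t y⁻¹)⁻¹ denotes the weighted harmonic mean of positive reals. Then f is decreasing on (0, 1/2) and increasing on (1/2, 1). -/
/-- The weighted harmonic mean of positive reals: `a !_t b = ((1-t)a⁻¹ + t b⁻¹)⁻¹`. -/
noncomputable def wharm (t a b : ℝ) : ℝ := ((1 - t) * a⁻¹ + t * b⁻¹)⁻¹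

lemma wharm_eq (c : ℝ) (hc : 0 < c) (t : ℝ) (ht0 : 0 < t) (ht1 : t < 1) :
    wharm t 1 c = c / (c * (1 - t) + t) := by
  have hd : 0 < c * (1 - t) + t := by nlinarith
  have h : (1 - t) * (1:ℝ)⁻¹ + t * c⁻¹ = (c * (1 - t) + t) / c := by
    field_simp
  rw [wharm, h, inv_div]

lemma tmul_pos {t : ℝ} (ht0 : 0 < t) (ht1 : t < 1) : 0 < t * (1 - t) :=
  mul_pos ht0 (by linarith)

lemma wharm_closed (c : ℝ) (hc : 0 < c) (t : ℝ) (ht0 : 0 < t) (ht1 : t < 1) :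
    (1 + c - (wharm t 1 c + wharm (1 - t) 1 c)) / (t * (1 - t))
      = (1 + c) * (1 - c) ^ 2 / (c + (1 - c) ^ 2 * (t * (1 - t))) := by
  have ht' : 0 < (1:ℝ) - t := by linarith
  have h3 : 0 < c + (1 - c) ^ 2 * (t * (1 - t)) := by
    have := mul_nonneg (sq_nonneg (1 - c)) (tmul_pos ht0 ht1).le
    linarith
  have hd1 : 0 < c * (1 - t) + t := by nlinarith
  have hd2 : 0 < c * (1 - (1 - t)) + (1 - t) := by nlinarith
  rw [wharm_eq c hc t ht0 ht1, wharm_eq c hc (1 - t) (by linarith) (by linarith)]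
  rw [div_eq_div_iff (tmul_pos ht0 ht1).ne' h3.ne']
  field_simp
  ring

theorem stmt_0 (c : ℝ) (hc : 0 < c) :
    AntitoneOn
      (fun t : ℝ => (1 + c - (wharm t 1 c + wharm (1 - t) 1 c)) / (t * (1 - t)))
      (Set.Ioo (0 : ℝ) (1 / 2)) ∧
    MonotoneOn
      (fun t : ℝ => (1 + c - (wharm t 1 c + wharm (1 - t) 1 c)) / (t * (1 - t)))
      (Set.Ioo (1 / 2 : ℝ) 1) := by
  have hA : (0:ℝ) ≤ (1 + c) * (1 - c) ^ 2 := by positivity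
  have key : ∀ x y : ℝ, 0 < x → x < 1 → 0 < y → y < 1 →
      x * (1 - x) ≤ y * (1 - y) →
      (1 + c) * (1 - c) ^ 2 / (c + (1 - c) ^ 2 * (y * (1 - y)))
        ≤ (1 + c) * (1 - c) ^ 2 / (c + (1 - c) ^ 2 * (x * (1 - x))) := by
    intro x y hx0 hx1 hy0 hy1 hle
    have hdx : 0 < c + (1 - c) ^ 2 * (x * (1 - x)) := by
      have := mul_nonneg (sq_nonneg (1 - c)) (tmul_pos hx0 hx1).le
      linarith
    have : c + (1 - c) ^ 2 * (x * (1 - x)) ≤ c + (1 - c) ^ 2 * (y * (1 - y)) := by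
      have := mul_le_mul_of_nonneg_left hle (sq_nonneg (1 - c))
      linarith
    gcongr
  constructor
  · intro x hx y hy hxy
    obtain ⟨hx0, hx1⟩ := hx; obtain ⟨hy0, hy1⟩ := hy
    simp only
    rw [wharm_closed c hc x hx0 (by linarith),
        wharm_closed c hc y hy0 (by linarith)]
    exact key x y hx0 (by linarith) hy0 (by linarith) (by nlinarith)
  · intro x hx y hy hxy
    obtain ⟨hx0, hx1⟩ := hx; obtain ⟨hy0, hy1⟩ := hy
    simp only
    rw [wharm_closed c hc x (by linarith) hx1,
        wharm_closed c hc y (by linarith) hy1]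
    exact key y x (by linarith) hy1 (by linarith) hx1 (by nlinarith)
end

section
/- Let a, b > 0 be real numbers and 0 ≤ t ≤ 1. Then (a !_t b + a !_{1-t} b)/2 + 4t(1-t)(a ∇ b - a ! b) ≤ a ∇ b. -/
theorem wharm_eq_mul_div (t : ℝ) {a b : ℝ} (ha : a ≠ 0) (hb : b ≠ 0) :
    wharm t a b = a * b / ((1 - t) * b + t * a) := by
  rw [wharm, show (1 - t) * a⁻¹ + t * b⁻¹ = ((1 - t) * b + t * a) / (a * b) by field_simp,
    inv_div]

theorem wharm_add_wharm_one_sub_gap_eq {a b t : ℝ} (ha : a ≠ 0) (hb : b ≠ 0) (hab : a + b ≠ 0)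
    (hp : (1 - t) * b + t * a ≠ 0) (hq : t * b + (1 - t) * a ≠ 0) :
    (a + b) / 2 - ((wharm t a b + wharm (1 - t) a b) / 2
      + 4 * t * (1 - t) * ((a + b) / 2 - wharm (1 / 2) a b))
      = t * (1 - t) * (2 * t - 1) ^ 2 * (a - b) ^ 4
        / (2 * (a + b) * ((1 - t) * b + t * a) * (t * b + (1 - t) * a)) := by
  have hsymm : wharm (1 - t) a b = a * b / (t * b + (1 - t) * a) := by
    rw [wharm_eq_mul_div _ ha hb, sub_sub_cancel]
  have hmid : wharm (1 / 2) a b = a * b / ((a + b) / 2) := by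
    rw [wharm_eq_mul_div _ ha hb]; ring_nf
  rw [wharm_eq_mul_div t ha hb, hsymm, hmid]
  -- `field_simp` only clears the denominators `p`, `q` once they are atoms.
  generalize hP : (1 - t) * b + t * a = p at *
  generalize hQ : t * b + (1 - t) * a = q at *
  field_simp
  subst hP hQ
  ring

theorem convex_combination_pos {a b t : ℝ} (ha : 0 < a) (hb : 0 < b) (ht0 : 0 ≤ t)
    (ht1 : t ≤ 1) : 0 < (1 - t) * b + t * a :=
  convex_Ioi (0 : ℝ) hb ha (sub_nonneg.2 ht1) ht0 (sub_add_cancel 1 t)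

theorem stmt_1 (a b t : ℝ) (ha : 0 < a) (hb : 0 < b) (ht0 : 0 ≤ t) (ht1 : t ≤ 1) :
    (wharm t a b + wharm (1 - t) a b) / 2
      + 4 * t * (1 - t) * ((a + b) / 2 - wharm (1 / 2) a b) ≤ (a + b) / 2 := by
  have hp := convex_combination_pos ha hb ht0 ht1
  have hq : 0 < t * b + (1 - t) * a := by
    simpa using convex_combination_pos ha hb (sub_nonneg.2 ht1) (sub_le_self 1 ht0)
  have h1t : 0 ≤ 1 - t := sub_nonneg.2 ht1
  have hgap := wharm_add_wharm_one_sub_gap_eq ha.ne' hb.ne' (by positivity) hp.ne' hq.ne'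
  have hgap_nonneg : 0 ≤ t * (1 - t) * (2 * t - 1) ^ 2 * (a - b) ^ 4
      / (2 * (a + b) * ((1 - t) * b + t * a) * (t * b + (1 - t) * a)) := by positivity
  linarith
end

section
/- Let a, b > 0 be real numbers and fix τ ∈ (0,1), and let t ∈ (0,1). If t ≤ min{τ, 1-τ} or t ≥ max{τ, 1-τ}, then (a ∇ b - !_τ(a,b)) / (τ(1-τ)) ≤ (a ∇ b - !_t(a,b)) / (t(1-t)). If instead min{τ, 1-τ} ≤ t ≤ max{τ, 1-τ}, the reverse inequality holds. -/
/-- The harmonic Heinz mean `!_t(a,b) = (a !_t b + a !_{1-t} b)/2`. -/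
noncomputable def heinzHarm (t a b : ℝ) : ℝ := (wharm t a b + wharm (1 - t) a b) / 2

lemma wharm_eq_div {a b : ℝ} (ha : a ≠ 0) (hb : b ≠ 0) (t : ℝ) :
    wharm t a b = a * b / ((1 - t) * b + t * a) := by
  rw [wharm, ← inv_div]
  congr 1
  field_simp

lemma heinzHarm_eq_div {a b t : ℝ} (ha : 0 < a) (hb : 0 < b) (ht : t ∈ Set.Icc (0 : ℝ) 1) :
    heinzHarm t a b = a * b * (a + b) / (2 * (t * (1 - t) * (a - b) ^ 2 + a * b)) := by
  obtain ⟨ht0, ht1⟩ := ht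
  have h1t : 0 ≤ 1 - t := by linarith
  have hm := lt_min ha hb
  have hd₁ : 0 < (1 - t) * b + t * a := by
    nlinarith [mul_le_mul_of_nonneg_left (min_le_right a b) h1t,
      mul_le_mul_of_nonneg_left (min_le_left a b) ht0]
  have hd₂ : 0 < t * b + (1 - t) * a := by
    nlinarith [mul_le_mul_of_nonneg_left (min_le_right a b) ht0,
      mul_le_mul_of_nonneg_left (min_le_left a b) h1t]
  have hprod : ((1 - t) * b + t * a) * (t * b + (1 - t) * a) = t * (1 - t) * (a - b) ^ 2 + a * b := by
    ring
  rw [heinzHarm, wharm_eq_div ha.ne' hb.ne', wharm_eq_div ha.ne' hb.ne', sub_sub_cancel,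
    div_add_div _ _ hd₁.ne' hd₂.ne', hprod, div_div, mul_comm _ (2 : ℝ)]
  congr 1
  ring

lemma arith_sub_heinzHarm_div_eq {a b t : ℝ} (ha : 0 < a) (hb : 0 < b)
    (ht : t ∈ Set.Ioo (0 : ℝ) 1) :
    ((a + b) / 2 - heinzHarm t a b) / (t * (1 - t))
      = (a + b) * (a - b) ^ 2 / (2 * (t * (1 - t) * (a - b) ^ 2 + a * b)) := by
  obtain ⟨ht0, ht1⟩ := ht
  have hp : 0 < t * (1 - t) := mul_pos ht0 (by linarith)
  have hD : 0 < t * (1 - t) * (a - b) ^ 2 + a * b := by positivity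
  rw [heinzHarm_eq_div ha hb ⟨ht0.le, ht1.le⟩]
  field_simp
  ring

lemma arith_sub_heinzHarm_div_le_of_le {a b s t : ℝ} (ha : 0 < a) (hb : 0 < b)
    (hs : s ∈ Set.Ioo (0 : ℝ) 1) (ht : t ∈ Set.Ioo (0 : ℝ) 1) (hst : s * (1 - s) ≤ t * (1 - t)) :
    ((a + b) / 2 - heinzHarm t a b) / (t * (1 - t))
      ≤ ((a + b) / 2 - heinzHarm s a b) / (s * (1 - s)) := by
  rw [arith_sub_heinzHarm_div_eq ha hb hs, arith_sub_heinzHarm_div_eq ha hb ht]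
  have hs' : 0 < s * (1 - s) := mul_pos hs.1 (by linarith [hs.2])
  apply div_le_div_of_nonneg_left (by positivity) (by positivity)
  gcongr

lemma mul_one_sub_sub_mul_one_sub (τ t : ℝ) :
    τ * (1 - τ) - t * (1 - t) = (t - τ) * (t - (1 - τ)) := by
  ring

theorem stmt_2 (a b τ t : ℝ) (ha : 0 < a) (hb : 0 < b)
    (hτ : τ ∈ Set.Ioo (0 : ℝ) 1) (ht : t ∈ Set.Ioo (0 : ℝ) 1) :
    ((t ≤ min τ (1 - τ) ∨ t ≥ max τ (1 - τ)) →
      ((a + b) / 2 - heinzHarm τ a b) / (τ * (1 - τ))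
        ≤ ((a + b) / 2 - heinzHarm t a b) / (t * (1 - t))) ∧
    ((min τ (1 - τ) ≤ t ∧ t ≤ max τ (1 - τ)) →
      ((a + b) / 2 - heinzHarm t a b) / (t * (1 - t))
        ≤ ((a + b) / 2 - heinzHarm τ a b) / (τ * (1 - τ))) := by
  have hdiff := mul_one_sub_sub_mul_one_sub τ t
  constructor
  · rintro (hle | hge)
    · refine arith_sub_heinzHarm_div_le_of_le ha hb ht hτ ?_
      rw [le_min_iff] at hle
      nlinarith [mul_nonneg (sub_nonneg.2 hle.1) (sub_nonneg.2 hle.2)]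
    · refine arith_sub_heinzHarm_div_le_of_le ha hb ht hτ ?_
      rw [ge_iff_le, max_le_iff] at hge
      nlinarith [mul_nonneg (sub_nonneg.2 hge.1) (sub_nonneg.2 hge.2)]
  · rintro ⟨hmin, hmax⟩
    refine arith_sub_heinzHarm_div_le_of_le ha hb hτ ht ?_
    rcases le_total τ (1 - τ) with hτle | hτge
    · rw [min_eq_left hτle] at hmin
      rw [max_eq_right hτle] at hmax
      nlinarith [mul_nonneg (sub_nonneg.2 hmin) (sub_nonneg.2 hmax)]
    · rw [min_eq_right hτge] at hmin
      rw [max_eq_left hτge] at hmax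
      nlinarith [mul_nonneg (sub_nonneg.2 hmin) (sub_nonneg.2 hmax)]
end

section
/- Fix a real number c > 0 and define f : (0,1) → ℝ by f(t) = ((1 + c)/(1 !_t c + 1 !_{1-t} c))^{1/(t(1-t))}, where x !_t y = ((1-t)x⁻¹ + t y⁻¹)⁻¹. Then f is decreasing on (0, 1/2) and increasing on (1/2, 1). -/
lemma key_mono (k : ℝ) (hk : 0 ≤ k) {u v : ℝ} (hu : 0 < u) (huv : u ≤ v) :
    (1 + k * v) ^ (1 / v : ℝ) ≤ (1 + k * u) ^ (1 / u : ℝ) := by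
  have hv : 0 < v := hu.trans_le huv
  have hb : (0 : ℝ) ≤ 1 + k * u := by positivity
  have hbern : 1 + k * v ≤ (1 + k * u) ^ (v / u : ℝ) := by
    have h := one_add_mul_self_le_rpow_one_add (s := k * u) (by nlinarith [mul_nonneg hk hu.le])
      (p := v / u) ((one_le_div hu).mpr huv)
    calc 1 + k * v = 1 + (v / u) * (k * u) := by field_simp
      _ ≤ (1 + k * u) ^ (v / u : ℝ) := h
  calc (1 + k * v) ^ (1 / v : ℝ)
      ≤ ((1 + k * u) ^ (v / u : ℝ)) ^ (1 / v : ℝ) :=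
        Real.rpow_le_rpow (by positivity) hbern (by positivity)
    _ = (1 + k * u) ^ ((v / u) * (1 / v) : ℝ) := by rw [← Real.rpow_mul hb]
    _ = (1 + k * u) ^ (1 / u : ℝ) := by
        congr 1
        field_simp

lemma wharm_sum (c : ℝ) (hc : 0 < c) {t : ℝ} (ht0 : 0 < t) (ht1 : t < 1) :
    (1 + c) / (wharm t 1 c + wharm (1 - t) 1 c)
      = 1 + ((c - 1) ^ 2 / c) * (t * (1 - t)) := by
  have h1 : (1 - t) * (1 : ℝ)⁻¹ + t * c⁻¹ > 0 := by
    have : 0 < 1 - t := by linarith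
    positivity
  have h2 : (1 - (1 - t)) * (1 : ℝ)⁻¹ + (1 - t) * c⁻¹ > 0 := by
    have : 0 < 1 - t := by linarith
    have : (1 - (1 - t)) * (1 : ℝ)⁻¹ + (1 - t) * c⁻¹ = t + (1 - t) * c⁻¹ := by ring
    rw [this]
    positivity
  have h1t : 0 < 1 - t := by linarith
  have hA : 0 < c * (1 - t) + t := by positivity
  have hB : 0 < c * t + (1 - t) := by positivity
  have w1 : wharm t 1 c = c / (c * (1 - t) + t) := by
    unfold wharm
    rw [inv_eq_iff_eq_inv, inv_div]
    field_simp
  have w2 : wharm (1 - t) 1 c = c / (c * t + (1 - t)) := by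
    unfold wharm
    rw [inv_eq_iff_eq_inv, inv_div]
    field_simp
    ring
  rw [w1, w2]
  have hS : 0 < c / (c * (1 - t) + t) + c / (c * t + (1 - t)) := by positivity
  rw [div_eq_iff hS.ne']
  field_simp
  ring

theorem stmt_3 (c : ℝ) (hc : 0 < c) :
    AntitoneOn
      (fun t : ℝ => ((1 + c) / (wharm t 1 c + wharm (1 - t) 1 c)) ^ (1 / (t * (1 - t))))
      (Set.Ioo (0 : ℝ) (1 / 2)) ∧
    MonotoneOn
      (fun t : ℝ => ((1 + c) / (wharm t 1 c + wharm (1 - t) 1 c)) ^ (1 / (t * (1 - t))))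
      (Set.Ioo (1 / 2 : ℝ) 1) := by
  set k : ℝ := (c - 1) ^ 2 / c with hk
  have hk0 : 0 ≤ k := by positivity
  constructor
  · intro s hs t ht hst
    obtain ⟨hs0, hs2⟩ := hs
    obtain ⟨ht0, ht2⟩ := ht
    have hs1 : s < 1 := by linarith
    have ht1 : t < 1 := by linarith
    dsimp only
    rw [wharm_sum c hc hs0 hs1, wharm_sum c hc ht0 ht1]
    have hu : 0 < s * (1 - s) := by nlinarith
    have huv : s * (1 - s) ≤ t * (1 - t) := by nlinarith
    exact key_mono k hk0 hu huv
  · intro s hs t ht hst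
    obtain ⟨hs0, hs2⟩ := hs
    obtain ⟨ht0, ht2⟩ := ht
    have hs0' : 0 < s := by linarith
    have ht0' : 0 < t := by linarith
    dsimp only
    rw [wharm_sum c hc hs0' hs2, wharm_sum c hc ht0' ht2]
    have hu : 0 < t * (1 - t) := by nlinarith
    have huv : t * (1 - t) ≤ s * (1 - s) := by nlinarith
    exact key_mono k hk0 hu huv
end

section
/- Let a, b > 0 be real numbers and 0 < τ, ν < 1. If (b - a)(τ - ν) ≥ 0, then τ(1-τ)(a ∇_ν b - a !_ν b) ≤ ν(1-ν)(a ∇_τ b - a !_τ b). If (b - a)(τ - ν) ≤ 0, then τ(1-τ)(a ∇_ν b - a !_ν b) ≥ ν(1-ν)(a ∇_τ b - a !_τ b). -/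
/-- The weighted arithmetic mean: `a ∇_t b = (1-t)a + t b`. -/
noncomputable def warith (t a b : ℝ) : ℝ := (1 - t) * a + t * b

lemma diff_eq (t a b : ℝ) (ha : 0 < a) (hb : 0 < b) (ht : t ∈ Set.Ioo (0:ℝ) 1) :
    warith t a b - wharm t a b = t * (1 - t) * (b - a)^2 / ((1 - t) * b + t * a) := by
  have hD : 0 < (1 - t) * b + t * a := by nlinarith [ht.1, ht.2]
  unfold warith wharm
  rw [show (1 - t) * a⁻¹ + t * b⁻¹ = ((1 - t) * b + t * a) / (a * b) by
    field_simp]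
  field_simp
  ring

theorem stmt_7 (a b τ ν : ℝ) (ha : 0 < a) (hb : 0 < b)
    (hτ : τ ∈ Set.Ioo (0 : ℝ) 1) (hν : ν ∈ Set.Ioo (0 : ℝ) 1) :
    ((b - a) * (τ - ν) ≥ 0 →
      τ * (1 - τ) * (warith ν a b - wharm ν a b)
        ≤ ν * (1 - ν) * (warith τ a b - wharm τ a b)) ∧
    ((b - a) * (τ - ν) ≤ 0 →
      ν * (1 - ν) * (warith τ a b - wharm τ a b)
        ≤ τ * (1 - τ) * (warith ν a b - wharm ν a b)) := by
  have hDτ : 0 < (1 - τ) * b + τ * a := by nlinarith [hτ.1, hτ.2]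
  have hDν : 0 < (1 - ν) * b + ν * a := by nlinarith [hν.1, hν.2]
  have hc : 0 ≤ τ * (1 - τ) * (ν * (1 - ν) * (b - a)^2) := by
    have h1 : (0:ℝ) ≤ τ * (1 - τ) := mul_nonneg hτ.1.le (by linarith [hτ.2])
    have h2 : (0:ℝ) ≤ ν * (1 - ν) := mul_nonneg hν.1.le (by linarith [hν.2])
    exact mul_nonneg h1 (mul_nonneg h2 (sq_nonneg _))
  rw [diff_eq τ a b ha hb hτ, diff_eq ν a b ha hb hν]
  constructor
  · intro h
    have hDle : (1 - τ) * b + τ * a ≤ (1 - ν) * b + ν * a := by nlinarith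
    rw [mul_div_assoc', mul_div_assoc', div_le_div_iff₀ hDν hDτ]
    nlinarith [mul_le_mul_of_nonneg_left hDle hc]
  · intro h
    have hDle : (1 - ν) * b + ν * a ≤ (1 - τ) * b + τ * a := by nlinarith
    rw [mul_div_assoc', mul_div_assoc', div_le_div_iff₀ hDτ hDν]
    nlinarith [mul_le_mul_of_nonneg_left hDle hc]
end

section
/- Fix a real number c > 0 and define f : (0,1) → ℝ by f(t) = ((1 ∇_t c)/(1 !_t c))^{1/(t(1-t))}, where x ∇_t y = (1-t)x + ty and x !_t y = ((1-t)x⁻¹ + t y⁻¹)⁻¹. Then f is decreasing on (0, 1/2) and increasing on (1/2, 1). -/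
lemma key_aux {k a b : ℝ} (hk : 0 ≤ k) (ha : 0 < a) (hab : a ≤ b) :
    (1 + k * b) ^ (1 / b) ≤ (1 + k * a) ^ (1 / a) := by
  have hb : 0 < b := ha.trans_le hab
  have hbase : (0:ℝ) ≤ 1 + k * b := by positivity
  have h1 : (1 + k * b) ^ (a / b) ≤ 1 + k * a := by
    have := rpow_one_add_le_one_add_mul_self (s := k * b) (p := a / b)
      (by nlinarith) (by positivity) (by rw [div_le_one hb]; exact hab)
    calc (1 + k * b) ^ (a / b) ≤ 1 + a / b * (k * b) := this
      _ = 1 + k * a := by field_simp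
  have h2 : (1 + k * b) ^ (1 / b) = ((1 + k * b) ^ (a / b)) ^ (1 / a) := by
    rw [← Real.rpow_mul hbase]
    congr 1
    field_simp
  rw [h2]
  exact Real.rpow_le_rpow (by positivity) h1 (by positivity)

lemma ratio_eq (c : ℝ) (hc : 0 < c) (t : ℝ) :
    warith t 1 c / wharm t 1 c = 1 + (c + c⁻¹ - 2) * (t * (1 - t)) := by
  unfold warith wharm
  rw [div_eq_mul_inv, inv_inv]
  field_simp
  ring

theorem stmt_8 (c : ℝ) (hc : 0 < c) :
    AntitoneOn
      (fun t : ℝ => (warith t 1 c / wharm t 1 c) ^ (1 / (t * (1 - t))))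
      (Set.Ioo (0 : ℝ) (1 / 2)) ∧
    MonotoneOn
      (fun t : ℝ => (warith t 1 c / wharm t 1 c) ^ (1 / (t * (1 - t))))
      (Set.Ioo (1 / 2 : ℝ) 1) := by
  set k : ℝ := c + c⁻¹ - 2 with hkdef
  have hk : 0 ≤ k := by
    have h1 : c * c⁻¹ = 1 := mul_inv_cancel₀ hc.ne'
    have := sq_nonneg (c - 1)
    rw [hkdef]
    nlinarith [inv_pos.mpr hc]
  constructor
  · intro a ha b hb hab
    simp only
    rw [ratio_eq c hc, ratio_eq c hc]
    exact key_aux hk (by nlinarith [ha.1, ha.2]) (by nlinarith [ha.1, ha.2, hb.1, hb.2])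
  · intro a ha b hb hab
    simp only
    rw [ratio_eq c hc, ratio_eq c hc]
    exact key_aux hk (by nlinarith [hb.1, hb.2]) (by nlinarith [ha.1, ha.2, hb.1, hb.2])
end

section
/- Fix a real number c > 0 and define f : (0,1) → ℝ by f(t) = ((1 ∇_t c)² - (1 !_t c)²)/(t(1-t)). If c < 1, then f is decreasing on (0,1); if c > 1, then f is increasing on (0,1). -/
lemma feq (c : ℝ) (hc : 0 < c) (t : ℝ) (ht : t ∈ Set.Ioo (0:ℝ) 1) :
    ((warith t 1 c) ^ 2 - (wharm t 1 c) ^ 2) / (t * (1 - t)) =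
      (c - 1) ^ 2 * ((1 + t * (c - 1)) * (c - t * (c - 1)) + c) / (c - t * (c - 1)) ^ 2 := by
  obtain ⟨ht0, ht1⟩ := ht
  have hQ : 0 < c - t * (c - 1) := by nlinarith
  have h1t : (0:ℝ) < 1 - t := by linarith
  rw [warith, wharm]
  have hc' : c ≠ 0 := ne_of_gt hc
  have : (1 - t) * (1:ℝ)⁻¹ + t * c⁻¹ = (c - t * (c - 1)) / c := by
    field_simp; ring
  rw [this]
  field_simp
  ring

theorem stmt_10 (c : ℝ) (hc : 0 < c) :
    (c < 1 →
      AntitoneOn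
        (fun t : ℝ => ((warith t 1 c) ^ 2 - (wharm t 1 c) ^ 2) / (t * (1 - t)))
        (Set.Ioo (0 : ℝ) 1)) ∧
    (1 < c →
      MonotoneOn
        (fun t : ℝ => ((warith t 1 c) ^ 2 - (wharm t 1 c) ^ 2) / (t * (1 - t)))
        (Set.Ioo (0 : ℝ) 1)) := by
  have hQ : ∀ t ∈ Set.Ioo (0:ℝ) 1, 0 < c - t * (c - 1) := by
    rintro t ⟨ht0, ht1⟩; nlinarith
  have hbr : ∀ s ∈ Set.Ioo (0:ℝ) 1, ∀ t ∈ Set.Ioo (0:ℝ) 1,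
      0 ≤ (1 + c) * (c - t * (c - 1)) * (c - s * (c - 1))
        + c * ((c - t * (c - 1)) + (c - s * (c - 1))) := by
    intro s hs t ht
    have h1 := hQ s hs; have h2 := hQ t ht
    have := mul_pos (mul_pos (by linarith : (0:ℝ) < 1 + c) h2) h1
    nlinarith
  constructor
  · intro hc1 s hs t ht hst
    simp only
    rw [feq c hc s hs, feq c hc t ht]
    have hQs := hQ s hs; have hQt := hQ t ht
    rw [div_le_div_iff₀ (by positivity) (by positivity)]
    have key : 0 ≤ (1 - c) ^ 3 * (t - s) *
        ((1 + c) * (c - t * (c - 1)) * (c - s * (c - 1))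
          + c * ((c - t * (c - 1)) + (c - s * (c - 1)))) :=
      mul_nonneg (mul_nonneg (pow_nonneg (by linarith) 3) (by linarith)) (hbr s hs t ht)
    nlinarith [key]
  · intro hc1 s hs t ht hst
    simp only
    rw [feq c hc s hs, feq c hc t ht]
    have hQs := hQ s hs; have hQt := hQ t ht
    rw [div_le_div_iff₀ (by positivity) (by positivity)]
    have key : 0 ≤ (c - 1) ^ 3 * (t - s) *
        ((1 + c) * (c - t * (c - 1)) * (c - s * (c - 1))
          + c * ((c - t * (c - 1)) + (c - s * (c - 1)))) :=
      mul_nonneg (mul_nonneg (pow_nonneg (by linarith) 3) (by linarith)) (hbr s hs t ht)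
    nlinarith [key]
end

section
/- Let a, b > 0 be real numbers and 0 < ν, τ < 1. If (τ - ν)(b - a) > 0, then ((a ∇_ν b)² - (a !_ν b)²)/(ν(1-ν)) ≤ ((a ∇_τ b)² - (a !_τ b)²)/(τ(1-τ)). If (τ - ν)(b - a) < 0, the reverse inequality holds. -/
lemma Dpos (t a b : ℝ) (ha : 0 < a) (hb : 0 < b) (ht : t ∈ Set.Ioo (0:ℝ) 1) :
    0 < (1 - t) * b + t * a := by
  obtain ⟨h0, h1⟩ := ht
  have := mul_pos (sub_pos.mpr h1) hb
  have := mul_pos h0 ha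
  linarith

lemma fval (t a b : ℝ) (ha : 0 < a) (hb : 0 < b) (ht : t ∈ Set.Ioo (0:ℝ) 1) :
    ((warith t a b) ^ 2 - (wharm t a b) ^ 2) / (t * (1 - t))
      = (b - a) ^ 2 * ((warith t a b) / ((1 - t) * b + t * a)
          + a * b / ((1 - t) * b + t * a) ^ 2) := by
  obtain ⟨h0, h1⟩ := ht
  have hD : 0 < (1 - t) * b + t * a := Dpos t a b ha hb ⟨h0, h1⟩
  have ht0 : t ≠ 0 := ne_of_gt h0
  have ht1 : (1 - t) ≠ 0 := ne_of_gt (sub_pos.mpr h1)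
  have hD0 : (1 - t) * b + t * a ≠ 0 := ne_of_gt hD
  have key : (1 - t) * a⁻¹ + t * b⁻¹ = ((1 - t) * b + t * a) / (a * b) := by
    field_simp
  have hH : wharm t a b = a * b / ((1 - t) * b + t * a) := by
    unfold wharm; rw [key, inv_div]
  rw [hH]
  unfold warith
  field_simp
  ring

lemma gmono (s t a b : ℝ) (ha : 0 < a) (hb : 0 < b)
    (hs : s ∈ Set.Ioo (0:ℝ) 1) (ht : t ∈ Set.Ioo (0:ℝ) 1)
    (h : (t - s) * (b - a) > 0) :
    (b - a) ^ 2 * ((warith s a b) / ((1 - s) * b + s * a)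
        + a * b / ((1 - s) * b + s * a) ^ 2)
      ≤ (b - a) ^ 2 * ((warith t a b) / ((1 - t) * b + t * a)
        + a * b / ((1 - t) * b + t * a) ^ 2) := by
  have hDs : 0 < (1 - s) * b + s * a := Dpos s a b ha hb hs
  have hDt : 0 < (1 - t) * b + t * a := Dpos t a b ha hb ht
  apply mul_le_mul_of_nonneg_left _ (sq_nonneg _)
  have h1 : (warith s a b) / ((1 - s) * b + s * a)
      ≤ (warith t a b) / ((1 - t) * b + t * a) := by
    rw [div_le_div_iff₀ hDs hDt]
    unfold warith
    nlinarith [mul_pos h (add_pos ha hb)]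
  have h2 : a * b / ((1 - s) * b + s * a) ^ 2
      ≤ a * b / ((1 - t) * b + t * a) ^ 2 := by
    rw [div_le_div_iff₀ (by positivity) (by positivity)]
    nlinarith [mul_pos (mul_pos h (add_pos hDs hDt)) (mul_pos ha hb)]
  linarith

theorem stmt_11 (a b ν τ : ℝ) (ha : 0 < a) (hb : 0 < b)
    (hν : ν ∈ Set.Ioo (0 : ℝ) 1) (hτ : τ ∈ Set.Ioo (0 : ℝ) 1) :
    ((τ - ν) * (b - a) > 0 →
      ((warith ν a b) ^ 2 - (wharm ν a b) ^ 2) / (ν * (1 - ν))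
        ≤ ((warith τ a b) ^ 2 - (wharm τ a b) ^ 2) / (τ * (1 - τ))) ∧
    ((τ - ν) * (b - a) < 0 →
      ((warith τ a b) ^ 2 - (wharm τ a b) ^ 2) / (τ * (1 - τ))
        ≤ ((warith ν a b) ^ 2 - (wharm ν a b) ^ 2) / (ν * (1 - ν))) := by
  constructor
  · intro h
    rw [fval ν a b ha hb hν, fval τ a b ha hb hτ]
    exact gmono ν τ a b ha hb hν hτ h
  · intro h
    rw [fval ν a b ha hb hν, fval τ a b ha hb hτ]
    exact gmono τ ν a b ha hb hτ hν (by nlinarith)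
end

section
/- Fix a real number c > 1 and define f : (0,1) → ℝ by f(t) = (1 #_t c - 1 !_t c)/(t(1-t)), where x #_t y = x^{1-t} y^t and x !_t y = ((1-t)x⁻¹ + t y⁻¹)⁻¹. Then f is increasing on (0,1). -/
/-- The weighted geometric mean: `a #_t b = a^(1-t) * b^t`. -/
noncomputable def wgeom (t a b : ℝ) : ℝ := a ^ (1 - t) * b ^ t

namespace Stmt12Aux

/-- `a c n = s^n/n! - u^n` with `s = log c`, `u = 1 - c⁻¹`. -/
noncomputable def aseq (c : ℝ) (n : ℕ) : ℝ :=
  (Real.log c) ^ n / n.factorial - (1 - c⁻¹) ^ n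

/-- Partial sums of `aseq`. -/
noncomputable def bseq (c : ℝ) (m : ℕ) : ℝ :=
  ∑ n ∈ Finset.range (m + 2), aseq c n

lemma hc0 {c : ℝ} (hc : 1 < c) : (0:ℝ) < c := lt_trans one_pos hc

lemma hu0 {c : ℝ} (hc : 1 < c) : 0 < 1 - c⁻¹ := by
  have : c⁻¹ < 1 := inv_lt_one_of_one_lt₀ hc
  linarith

lemma hu1 {c : ℝ} (hc : 1 < c) : 1 - c⁻¹ < 1 := by
  have : 0 < c⁻¹ := inv_pos.mpr (hc0 hc)
  linarith

lemma hs0 {c : ℝ} (hc : 1 < c) : 0 < Real.log c := Real.log_pos hc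

/-- Claim A: in the increasing phase, `u^n * n! ≤ s^n`. -/
lemma claimA {c : ℝ} (hc : 1 < c) : ∀ n : ℕ, (n : ℝ) * (1 - c⁻¹) ≤ Real.log c →
    (1 - c⁻¹) ^ n * n.factorial ≤ (Real.log c) ^ n := by
  intro n
  induction n with
  | zero => simp
  | succ n ih =>
    intro h
    have hu := hu0 hc
    have hn : (n : ℝ) * (1 - c⁻¹) ≤ Real.log c := by
      have h' : ((n:ℝ) + 1) * (1 - c⁻¹) ≤ Real.log c := by push_cast at h; linarith
      nlinarith
    have h1 := ih hn
    have h2 : ((n : ℝ) + 1) * (1 - c⁻¹) ≤ Real.log c := by push_cast at h; linarith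
    have hfpos : (0:ℝ) < n.factorial := by exact_mod_cast n.factorial_pos
    have hpow : (0:ℝ) < (1 - c⁻¹) ^ n := pow_pos hu n
    calc (1 - c⁻¹) ^ (n+1) * ((n+1).factorial : ℝ)
        = ((1 - c⁻¹) ^ n * n.factorial) * (((n:ℝ) + 1) * (1 - c⁻¹)) := by
          rw [Nat.factorial_succ]; push_cast; ring
      _ ≤ (Real.log c) ^ n * Real.log c := by
          apply mul_le_mul h1 h2 (by positivity)
          exact pow_nonneg (hs0 hc).le n
      _ = (Real.log c) ^ (n+1) := by ring

/-- Claim B: nonnegativity of `aseq` propagates downward by one step. -/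
lemma claimB {c : ℝ} (hc : 1 < c) : ∀ n : ℕ,
    (1 - c⁻¹) ^ (n+1) * ((n+1).factorial : ℝ) ≤ (Real.log c) ^ (n+1) →
    (1 - c⁻¹) ^ n * (n.factorial : ℝ) ≤ (Real.log c) ^ n := by
  intro n h
  by_contra hlt
  push_neg at hlt
  have hu := hu0 hc
  have hs := hs0 hc
  have hfpos : (0:ℝ) < n.factorial := by exact_mod_cast n.factorial_pos
  rcases le_or_gt (((n:ℝ) + 1) * (1 - c⁻¹)) (Real.log c) with hcase | hcase
  · have hn : (n : ℝ) * (1 - c⁻¹) ≤ Real.log c := by nlinarith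
    exact absurd (claimA hc n hn) (not_le.mpr hlt)
  · have hspos : (0:ℝ) < (Real.log c) ^ n := pow_pos hs n
    have hkey : (Real.log c) ^ (n+1) < (1 - c⁻¹) ^ (n+1) * ((n+1).factorial : ℝ) := by
      have hm := mul_lt_mul'' hlt hcase (by positivity) (by positivity)
      calc (Real.log c) ^ (n+1) = (Real.log c) ^ n * Real.log c := by ring
        _ < ((1 - c⁻¹) ^ n * n.factorial) * (((n:ℝ) + 1) * (1 - c⁻¹)) := hm
        _ = (1 - c⁻¹) ^ (n+1) * ((n+1).factorial : ℝ) := by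
            rw [Nat.factorial_succ]; push_cast; ring
    linarith

/-- Downward propagation of nonnegativity of `aseq`, many steps. -/
lemma claimB' {c : ℝ} (hc : 1 < c) : ∀ k n : ℕ,
    (1 - c⁻¹) ^ (n+k) * ((n+k).factorial : ℝ) ≤ (Real.log c) ^ (n+k) →
    (1 - c⁻¹) ^ n * (n.factorial : ℝ) ≤ (Real.log c) ^ n := by
  intro k
  induction k with
  | zero => intro n h; simpa using h
  | succ k ih =>
    intro n h
    have e : n + (k+1) = (n+k) + 1 := by omega
    rw [e] at h
    exact ih n (claimB hc (n+k) h)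

lemma aseq_nonneg_iff {c : ℝ} (n : ℕ) :
    0 ≤ aseq c n ↔ (1 - c⁻¹) ^ n * (n.factorial : ℝ) ≤ (Real.log c) ^ n := by
  have hf : (0:ℝ) < n.factorial := by exact_mod_cast n.factorial_pos
  rw [aseq, sub_nonneg, le_div_iff₀ hf]

lemma summable_a {c : ℝ} (hc : 1 < c) : Summable (aseq c) :=
  (Real.summable_pow_div_factorial _).sub
    (summable_geometric_of_lt_one (hu0 hc).le (hu1 hc))

lemma tsum_exp {c : ℝ} (hc : 1 < c) :
    ∑' n : ℕ, (Real.log c) ^ n / (n.factorial : ℝ) = c := by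
  have h : Real.exp (Real.log c) = ∑' n : ℕ, (Real.log c) ^ n / (n.factorial : ℝ) := by
    rw [Real.exp_eq_exp_ℝ, NormedSpace.exp_eq_tsum_div]
  rw [← h, Real.exp_log (hc0 hc)]

lemma tsum_geo {c : ℝ} (hc : 1 < c) : ∑' n : ℕ, (1 - c⁻¹) ^ n = c := by
  rw [tsum_geometric_of_lt_one (hu0 hc).le (hu1 hc)]
  simp [inv_inv]

lemma tsum_a {c : ℝ} (hc : 1 < c) : ∑' n, aseq c n = 0 := by
  unfold aseq
  rw [Summable.tsum_sub (Real.summable_pow_div_factorial _)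
    (summable_geometric_of_lt_one (hu0 hc).le (hu1 hc)), tsum_exp hc, tsum_geo hc]
  ring

/-- Key: all partial sums are nonnegative. -/
lemma bseq_nonneg {c : ℝ} (hc : 1 < c) (m : ℕ) : 0 ≤ bseq c m := by
  rcases le_or_gt 0 (aseq c (m+2)) with hpos | hneg
  · -- all terms up to m+1 are nonnegative
    apply Finset.sum_nonneg
    intro n hn
    rw [Finset.mem_range] at hn
    rw [aseq_nonneg_iff]
    have h2 := (aseq_nonneg_iff (c := c) (m+2)).mp hpos
    refine claimB' hc (m + 2 - n) n ?_
    rw [show n + (m + 2 - n) = m + 2 by omega]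
    exact h2
  · -- the tail is nonpositive
    have hsum := Summable.sum_add_tsum_nat_add (f := aseq c) (m+2) (summable_a hc)
    rw [tsum_a hc] at hsum
    have htail : ∑' n : ℕ, aseq c (n + (m+2)) ≤ 0 := by
      apply tsum_nonpos
      intro i
      by_contra hp
      push_neg at hp
      have h1 := (aseq_nonneg_iff (c := c) (i + (m+2))).mp hp.le
      rw [show i + (m+2) = (m+2) + i by omega] at h1
      have h2 := claimB' hc i (m+2) h1
      have h3 := (aseq_nonneg_iff (c := c) (m+2)).mpr h2
      linarith
    unfold bseq
    linarith

lemma bseq_le {c : ℝ} (hc : 1 < c) (m : ℕ) : bseq c m ≤ c := by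
  have h1 : bseq c m ≤ ∑ n ∈ Finset.range (m+2), (Real.log c) ^ n / (n.factorial : ℝ) := by
    apply Finset.sum_le_sum
    intro n _
    unfold aseq
    have : (0:ℝ) ≤ (1 - c⁻¹) ^ n := pow_nonneg (hu0 hc).le n
    linarith
  have h2 : ∑ n ∈ Finset.range (m+2), (Real.log c) ^ n / (n.factorial : ℝ)
      ≤ ∑' n : ℕ, (Real.log c) ^ n / (n.factorial : ℝ) := by
    apply Summable.sum_le_tsum
    · intro n _
      have hs := (hs0 hc).le
      positivity
    · exact Real.summable_pow_div_factorial _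
  rw [tsum_exp hc] at h2
  linarith

lemma summable_bt {c t : ℝ} (hc : 1 < c) (ht : t ∈ Set.Ioo (0:ℝ) 1) :
    Summable (fun m : ℕ => bseq c m * t ^ m) := by
  apply Summable.of_nonneg_of_le
  · intro m
    exact mul_nonneg (bseq_nonneg hc m) (pow_nonneg ht.1.le m)
  · intro m
    exact mul_le_mul_of_nonneg_right (bseq_le hc m) (pow_nonneg ht.1.le m)
  · exact (summable_geometric_of_lt_one ht.1.le ht.2).mul_left c

lemma summable_st {c t : ℝ} (hc : 1 < c) (ht : t ∈ Set.Ioo (0:ℝ) 1) :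
    Summable (fun n : ℕ => (Real.log c) ^ n / (n.factorial : ℝ) * t ^ n) := by
  apply Summable.of_nonneg_of_le
  · intro n
    have hs := (hs0 hc).le
    have htt := ht.1.le
    positivity
  · intro n
    have h1 : t ^ n ≤ 1 := pow_le_one₀ ht.1.le ht.2.le
    have h2 : (0:ℝ) ≤ (Real.log c) ^ n / (n.factorial : ℝ) := by
      have hs := (hs0 hc).le; positivity
    nlinarith
  · exact Real.summable_pow_div_factorial _

lemma ut_lt_one {c t : ℝ} (hc : 1 < c) (ht : t ∈ Set.Ioo (0:ℝ) 1) : (1 - c⁻¹) * t < 1 := by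
  have h := mul_lt_mul'' (hu1 hc) ht.2 (hu0 hc).le ht.1.le
  linarith

lemma summable_ut {c t : ℝ} (hc : 1 < c) (ht : t ∈ Set.Ioo (0:ℝ) 1) :
    Summable (fun n : ℕ => (1 - c⁻¹) ^ n * t ^ n) := by
  have h : ∀ n : ℕ, (1 - c⁻¹) ^ n * t ^ n = ((1 - c⁻¹) * t) ^ n := fun n => (mul_pow _ _ _).symm
  simp_rw [h]
  exact summable_geometric_of_lt_one (mul_nonneg (hu0 hc).le ht.1.le) (ut_lt_one hc ht)

lemma summable_at {c t : ℝ} (hc : 1 < c) (ht : t ∈ Set.Ioo (0:ℝ) 1) :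
    Summable (fun n : ℕ => aseq c n * t ^ n) := by
  have h : ∀ n : ℕ, aseq c n * t ^ n
      = (Real.log c) ^ n / (n.factorial : ℝ) * t ^ n - (1 - c⁻¹) ^ n * t ^ n := by
    intro n; unfold aseq; ring
  simp_rw [h]
  exact (summable_st hc ht).sub (summable_ut hc ht)

/-- The numerator as a power series. -/
lemma num_eq {c t : ℝ} (hc : 1 < c) (ht : t ∈ Set.Ioo (0:ℝ) 1) :
    wgeom t 1 c - wharm t 1 c = ∑' n : ℕ, aseq c n * t ^ n := by
  have hgeom : wgeom t 1 c = ∑' n : ℕ, (Real.log c) ^ n / (n.factorial : ℝ) * t ^ n := by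
    unfold wgeom
    rw [Real.one_rpow, one_mul, Real.rpow_def_of_pos (hc0 hc),
      Real.exp_eq_exp_ℝ, NormedSpace.exp_eq_tsum_div]
    apply tsum_congr
    intro n
    rw [mul_pow]
    ring
  have hharm : wharm t 1 c = ∑' n : ℕ, (1 - c⁻¹) ^ n * t ^ n := by
    have h1 : ∀ n : ℕ, (1 - c⁻¹) ^ n * t ^ n = ((1 - c⁻¹) * t) ^ n :=
      fun n => (mul_pow _ _ _).symm
    simp_rw [h1]
    rw [tsum_geometric_of_lt_one (mul_nonneg (hu0 hc).le ht.1.le) (ut_lt_one hc ht)]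
    unfold wharm
    congr 1
    rw [inv_one]
    ring
  rw [hgeom, hharm, ← Summable.tsum_sub (summable_st hc ht) (summable_ut hc ht)]
  apply tsum_congr
  intro n
  unfold aseq
  ring

set_option maxHeartbeats 1000000 in
/-- Main representation: the function equals `∑ bseq c m * t^m`. -/
lemma rep_eq {c t : ℝ} (hc : 1 < c) (ht : t ∈ Set.Ioo (0:ℝ) 1) :
    (wgeom t 1 c - wharm t 1 c) / (t * (1 - t)) = ∑' m : ℕ, bseq c m * t ^ m := by
  have ht0 : (0:ℝ) < t := ht.1
  have ht1 : t < 1 := ht.2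
  set S := ∑' m : ℕ, bseq c m * t ^ m with hS
  -- summabilities
  have hSb := summable_bt hc ht
  have hSb1 : Summable (fun m : ℕ => bseq c (m+1) * t ^ (m+1)) :=
    (summable_nat_add_iff 1).mpr hSb
  have hSbt : Summable (fun m : ℕ => bseq c m * t ^ (m+1)) := by
    have h : ∀ m : ℕ, bseq c m * t ^ (m+1) = t * (bseq c m * t ^ m) := by
      intro m; ring
    simp_rw [h]
    exact hSb.mul_left t
  have hSa1 : Summable (fun n : ℕ => aseq c (n+1) * t ^ n) := by
    have h := (summable_nat_add_iff (f := fun n : ℕ => aseq c n * t ^ n) 1).mpr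
      (summable_at hc ht)
    have h2 : ∀ n : ℕ, aseq c (n+1) * t ^ n = t⁻¹ * (aseq c (n+1) * t ^ (n+1)) := by
      intro n; field_simp; ring
    simp_rw [h2]
    exact h.mul_left t⁻¹
  -- step 1: (1 - t) * S = ∑' n, aseq c (n+1) * t^n
  have step1 : (1 - t) * S = ∑' n : ℕ, aseq c (n+1) * t ^ n := by
    have htS : t * S = ∑' m : ℕ, bseq c m * t ^ (m+1) := by
      rw [hS, ← tsum_mul_left]
      apply tsum_congr
      intro m; ring
    have hSshift : S = bseq c 0 + ∑' m : ℕ, bseq c (m+1) * t ^ (m+1) := by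
      rw [hS, Summable.tsum_eq_zero_add hSb]
      simp
    have hdiff : (1 - t) * S = bseq c 0 + ∑' m : ℕ, (bseq c (m+1) - bseq c m) * t ^ (m+1) := by
      have h : (1 - t) * S = S - t * S := by ring
      rw [h, htS, hSshift, add_sub_assoc, ← Summable.tsum_sub hSb1 hSbt]
      congr 1
      apply tsum_congr
      intro m; ring
    have hbdiff : ∀ m : ℕ, bseq c (m+1) - bseq c m = aseq c (m+2) := by
      intro m
      unfold bseq
      rw [show m + 1 + 2 = (m + 2) + 1 by ring, Finset.sum_range_succ]
      ring
    have hrhs : ∑' n : ℕ, aseq c (n+1) * t ^ n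
        = aseq c 1 + ∑' m : ℕ, aseq c (m+2) * t ^ (m+1) := by
      rw [Summable.tsum_eq_zero_add hSa1]
      simp
    have hb0 : bseq c 0 = aseq c 1 := by
      unfold bseq
      rw [show (0:ℕ) + 2 = 2 by rfl, Finset.sum_range_succ, Finset.sum_range_one]
      have h0 : aseq c 0 = 0 := by unfold aseq; simp
      rw [h0]; ring
    rw [hdiff, hrhs, hb0]
    congr 1
    apply tsum_congr
    intro m
    rw [hbdiff]
  -- step 2: numerator = t * (1-t) * S
  have step2 : wgeom t 1 c - wharm t 1 c = t * ((1 - t) * S) := by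
    rw [num_eq hc ht, step1]
    rw [Summable.tsum_eq_zero_add (summable_at hc ht)]
    have ha0 : aseq c 0 = 0 := by unfold aseq; simp
    rw [ha0, ← tsum_mul_left]
    simp only [zero_mul, zero_add]
    apply tsum_congr
    intro n; ring
  rw [step2]
  have hne1 : t ≠ 0 := ht0.ne'
  have hne2 : (1 - t) ≠ 0 := by linarith
  field_simp

end Stmt12Aux

theorem stmt_12 (c : ℝ) (hc : 1 < c) :
    MonotoneOn
      (fun t : ℝ => (wgeom t 1 c - wharm t 1 c) / (t * (1 - t)))
      (Set.Ioo (0 : ℝ) 1) := by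
  intro t1 h1 t2 h2 h12
  simp only
  rw [Stmt12Aux.rep_eq hc h1, Stmt12Aux.rep_eq hc h2]
  apply Summable.tsum_le_tsum _ (Stmt12Aux.summable_bt hc h1) (Stmt12Aux.summable_bt hc h2)
  intro m
  apply mul_le_mul_of_nonneg_left _ (Stmt12Aux.bseq_nonneg hc m)
  exact pow_le_pow_left₀ h1.1.le h12 m
end

section
/- Let a, b > 0 be real numbers and 0 < ν, τ < 1. If (τ - ν)(b - a) > 0, then (a #_ν b - a !_ν b)/(ν(1-ν)) ≤ (a #_τ b - a !_τ b)/(τ(1-τ)). -/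
/-!
By the symmetries `a #_t b = b #_{1-t} a` and `a !_t b = b !_{1-t} a` we may assume `a ≤ b`.
Put `x = log (b / a) ≥ 0` and `u = 1 - a / b = 1 - exp (-x)`. Then
`(a #_t b - a !_t b) / a = exp (t x) - (1 - t u)⁻¹ = ∑ₙ (xⁿ / n! - uⁿ) tⁿ`, whose constant
coefficient vanishes, so dividing by `t (1 - t)` gives a power series in `t` whose coefficients are
the partial sums `∑_{i ≤ n + 1} (xⁱ / i! - uⁱ)`. These are nonnegative: as `1 - u = exp (-x)`, this
says that the tail `exp x - ∑_{i ≤ k} xⁱ / i!` is at most `exp x * u ^ (k + 1)`, and indeed the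
bound `x ^ (k + 1) / (k + 1)! ≥ exp (-x) * tail` shows that each new term removes at least the
fraction `exp (-x)` of the tail. A power series with nonnegative coefficients is monotone on
`[0, 1)`.
-/

open Finset Nat Real

lemma Real.hasSum_pow_div_factorial (x : ℝ) : HasSum (fun n ↦ x ^ n / n !) (exp x) :=
  exp_eq_exp_ℝ ▸ NormedSpace.expSeries_div_hasSum_exp x

lemma Real.one_sub_exp_neg_nonneg {x : ℝ} (hx : 0 ≤ x) : 0 ≤ 1 - exp (-x) :=
  sub_nonneg.2 (exp_le_one_iff.2 (neg_nonpos.2 hx))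

lemma Real.pow_add_div_factorial_le {x : ℝ} (hx : 0 ≤ x) (i k : ℕ) :
    x ^ (i + k) / (i + k)! ≤ x ^ k / k ! * (x ^ i / i !) := by
  have hfac : ((i ! * k ! : ℕ) : ℝ) ≤ (i + k)! :=
    mod_cast Nat.le_of_dvd (factorial_pos _) (factorial_mul_factorial_dvd_factorial_add i k)
  calc x ^ (i + k) / (i + k)! ≤ x ^ (i + k) / ((i ! * k ! : ℕ) : ℝ) := by gcongr
    _ = x ^ k / k ! * (x ^ i / i !) := by push_cast; ring

lemma Real.exp_sub_sum_range_le {x : ℝ} (hx : 0 ≤ x) (k : ℕ) :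
    exp x - ∑ i ∈ range k, x ^ i / i ! ≤ x ^ k / k ! * exp x := by
  have htail : HasSum (fun i ↦ x ^ (i + k) / (i + k)!) (exp x - ∑ i ∈ range k, x ^ i / i !) :=
    (hasSum_nat_add_iff' k).mpr (hasSum_pow_div_factorial x)
  exact hasSum_le (pow_add_div_factorial_le hx · k) htail
    ((hasSum_pow_div_factorial x).mul_left _)

lemma Real.exp_sub_sum_range_succ_le {x : ℝ} (hx : 0 ≤ x) (k : ℕ) :
    exp x - ∑ i ∈ range (k + 1), x ^ i / i ! ≤ exp x * (1 - exp (-x)) ^ (k + 1) := by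
  induction k with
  | zero =>
    rw [zero_add, sum_range_one, pow_one, mul_sub, mul_one, ← exp_add, add_neg_cancel, exp_zero]
    simp
  | succ k ih =>
    set T := exp x - ∑ i ∈ range (k + 1), x ^ i / (i ! : ℝ)
    have hT : exp (-x) * T ≤ x ^ (k + 1) / (k + 1)! :=
      calc exp (-x) * T ≤ exp (-x) * (x ^ (k + 1) / (k + 1)! * exp x) := by
            gcongr; exact exp_sub_sum_range_le hx (k + 1)
        _ = x ^ (k + 1) / (k + 1)! := by
            rw [mul_left_comm, ← exp_add, neg_add_cancel, exp_zero, mul_one]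
    have hu := one_sub_exp_neg_nonneg hx
    calc exp x - ∑ i ∈ range (k + 1 + 1), x ^ i / i ! = T - x ^ (k + 1) / (k + 1)! := by
          rw [sum_range_succ]; ring
      _ ≤ (1 - exp (-x)) * T := by linarith
      _ ≤ (1 - exp (-x)) * (exp x * (1 - exp (-x)) ^ (k + 1)) := by gcongr
      _ = exp x * (1 - exp (-x)) ^ (k + 1 + 1) := by ring

lemma Real.sum_range_pow_one_sub_exp_neg_le {x : ℝ} (hx : 0 ≤ x) (n : ℕ) :
    ∑ i ∈ range n, (1 - exp (-x)) ^ i ≤ ∑ i ∈ range n, x ^ i / i ! := by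
  rcases n with _ | k
  · simp
  have hgeom :
      ∑ i ∈ range (k + 1), (1 - exp (-x)) ^ i = exp x * (1 - (1 - exp (-x)) ^ (k + 1)) := by
    have := mul_neg_geom_sum (1 - exp (-x)) (k + 1)
    rw [sub_sub_cancel] at this
    rw [← this, ← mul_assoc, ← exp_add, add_neg_cancel, exp_zero, one_mul]
  have := exp_sub_sum_range_succ_le hx k
  rw [hgeom]
  linarith

lemma hasSum_mul_pow_of_sum_range_mul_pow {R : Type*} [CommRing R] [TopologicalSpace R]
    [IsTopologicalRing R] {c : ℕ → R} {t S : R}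
    (h : HasSum (fun n ↦ (∑ i ∈ range (n + 1), c i) * t ^ n) S) :
    HasSum (fun n ↦ c n * t ^ n) ((1 - t) * S) := by
  have hshift := (hasSum_nat_add_iff' 1).mpr h
  rw [sum_range_one, zero_add, sum_range_one, pow_zero, mul_one] at hshift
  have hsucc : HasSum (fun n ↦ c (n + 1) * t ^ (n + 1)) (S - c 0 - t * S) :=
    (hshift.sub (h.mul_left t)).congr_fun fun n ↦ by
      rw [sum_range_succ _ (n + 1)]
      ring
  convert HasSum.zero_add (f := fun n ↦ c n * t ^ n) hsucc using 1
  ring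

noncomputable def expGeomCoeff (x : ℝ) (n : ℕ) : ℝ := x ^ n / (n ! : ℝ) - (1 - exp (-x)) ^ n

lemma expGeomCoeff_zero (x : ℝ) : expGeomCoeff x 0 = 0 := by simp [expGeomCoeff]

lemma sum_range_expGeomCoeff_nonneg {x : ℝ} (hx : 0 ≤ x) (n : ℕ) :
    0 ≤ ∑ i ∈ range n, expGeomCoeff x i := by
  simp only [expGeomCoeff, sum_sub_distrib, sub_nonneg]
  exact sum_range_pow_one_sub_exp_neg_le hx n

lemma sum_range_expGeomCoeff_le_exp {x : ℝ} (hx : 0 ≤ x) (n : ℕ) :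
    ∑ i ∈ range n, expGeomCoeff x i ≤ exp x := by
  have hu := one_sub_exp_neg_nonneg hx
  simp only [expGeomCoeff, sum_sub_distrib]
  linarith [sum_le_exp_of_nonneg hx n, sum_nonneg fun i (_ : i ∈ range n) ↦ pow_nonneg hu i]

lemma hasSum_expGeomCoeff_mul_pow {x t : ℝ} (hx : 0 ≤ x) (ht₀ : 0 ≤ t) (ht₁ : t < 1) :
    HasSum (fun n ↦ expGeomCoeff x n * t ^ n) (exp (t * x) - (1 - t * (1 - exp (-x)))⁻¹) := by
  have hu₀ := one_sub_exp_neg_nonneg hx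
  have hu₁ : 1 - exp (-x) < 1 := by linarith [exp_pos (-x)]
  have htu₁ : t * (1 - exp (-x)) < 1 := by nlinarith
  refine ((hasSum_pow_div_factorial (t * x)).sub
    (hasSum_geometric_of_lt_one (by positivity) htu₁)).congr_fun fun n ↦ ?_
  rw [expGeomCoeff, mul_pow, mul_pow]
  ring

lemma hasSum_sum_range_expGeomCoeff_mul_pow {x t : ℝ} (hx : 0 ≤ x) (ht : t ∈ Set.Ioo 0 1) :
    HasSum (fun n ↦ (∑ i ∈ range (n + 2), expGeomCoeff x i) * t ^ n)
      ((exp (t * x) - (1 - t * (1 - exp (-x)))⁻¹) / (t * (1 - t))) := by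
  obtain ⟨ht₀, ht₁⟩ := ht
  have hpartial : ∀ n, ∑ i ∈ range (n + 2), expGeomCoeff x i
      = ∑ i ∈ range (n + 1), expGeomCoeff x (i + 1) := fun n ↦ by
    rw [sum_range_succ', expGeomCoeff_zero, add_zero]
  obtain ⟨G, hG⟩ : Summable (fun n ↦ (∑ i ∈ range (n + 2), expGeomCoeff x i) * t ^ n) :=
    .of_nonneg_of_le (fun n ↦ by have := sum_range_expGeomCoeff_nonneg hx (n + 2); positivity)
      (fun n ↦ by gcongr; exact sum_range_expGeomCoeff_le_exp hx _)
      ((summable_geometric_of_lt_one ht₀.le ht₁).mul_left (exp x))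
  have hseries : HasSum (fun n ↦ expGeomCoeff x (n + 1) * t ^ (n + 1)) (t * ((1 - t) * G)) := by
    refine ((hasSum_mul_pow_of_sum_range_mul_pow (c := fun i ↦ expGeomCoeff x (i + 1))
      (by simpa only [hpartial] using hG)).mul_left t).congr_fun fun n ↦ ?_
    ring
  have hE := (hasSum_nat_add_iff' 1).mpr (hasSum_expGeomCoeff_mul_pow hx ht₀.le ht₁)
  simp only [sum_range_one, expGeomCoeff_zero, zero_mul, sub_zero] at hE
  rwa [hE.unique hseries, ← mul_assoc, mul_div_cancel_left₀ G (mul_pos ht₀ (sub_pos.2 ht₁)).ne']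

lemma wgeom_eq_mul_exp {a b : ℝ} (ha : 0 < a) (hb : 0 < b) (t : ℝ) :
    wgeom t a b = a * exp (t * log (b / a)) := by
  rw [wgeom, rpow_def_of_pos ha, rpow_def_of_pos hb, log_div hb.ne' ha.ne', ← exp_log ha,
    ← exp_add, ← exp_add, log_exp]
  ring_nf

lemma wharm_eq_mul_inv {a b : ℝ} (ha : a ≠ 0) (t : ℝ) :
    wharm t a b = a * (1 - t * (1 - a / b))⁻¹ := by
  rw [wharm, ← inv_inv a, ← mul_inv, inv_inv]
  congr 1
  field_simp
  ring

lemma wgeom_one_sub_swap (t a b : ℝ) : wgeom (1 - t) b a = wgeom t a b := by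
  rw [wgeom, wgeom, sub_sub_cancel, mul_comm]

lemma wharm_one_sub_swap (t a b : ℝ) : wharm (1 - t) b a = wharm t a b := by
  rw [wharm, wharm, sub_sub_cancel, add_comm]

lemma hasSum_wgeom_sub_wharm_div {a b t : ℝ} (ha : 0 < a) (hab : a ≤ b) (ht : t ∈ Set.Ioo 0 1) :
    HasSum (fun n ↦ a * (∑ i ∈ range (n + 2), expGeomCoeff (log (b / a)) i) * t ^ n)
      ((wgeom t a b - wharm t a b) / (t * (1 - t))) := by
  have hb : 0 < b := ha.trans_le hab
  have hx : 0 ≤ log (b / a) := log_nonneg ((one_le_div ha).mpr hab)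
  have hexp : exp (-log (b / a)) = a / b := by
    rw [← log_inv, inv_div, exp_log (div_pos ha hb)]
  have h := (hasSum_sum_range_expGeomCoeff_mul_pow hx ht).mul_left a
  rw [hexp] at h
  rw [wgeom_eq_mul_exp ha hb, wharm_eq_mul_inv ha.ne', ← mul_sub, mul_div_assoc]
  exact h.congr_fun fun n ↦ by ring

lemma wgeom_sub_wharm_div_le_of_le {a b ν τ : ℝ} (ha : 0 < a) (hab : a ≤ b)
    (hν : ν ∈ Set.Ioo 0 1) (hτ : τ ∈ Set.Ioo 0 1) (hντ : ν ≤ τ) :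
    (wgeom ν a b - wharm ν a b) / (ν * (1 - ν)) ≤ (wgeom τ a b - wharm τ a b) / (τ * (1 - τ)) := by
  have hx : 0 ≤ log (b / a) := log_nonneg ((one_le_div ha).mpr hab)
  refine hasSum_le (fun n ↦ ?_) (hasSum_wgeom_sub_wharm_div ha hab hν)
    (hasSum_wgeom_sub_wharm_div ha hab hτ)
  have := sum_range_expGeomCoeff_nonneg hx (n + 2)
  gcongr
  exact hν.1.le

theorem stmt_13 (a b ν τ : ℝ) (ha : 0 < a) (hb : 0 < b)
    (hν : ν ∈ Set.Ioo (0 : ℝ) 1) (hτ : τ ∈ Set.Ioo (0 : ℝ) 1)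
    (h : (τ - ν) * (b - a) > 0) :
    (wgeom ν a b - wharm ν a b) / (ν * (1 - ν))
      ≤ (wgeom τ a b - wharm τ a b) / (τ * (1 - τ)) := by
  rcases le_or_gt a b with hab | hba
  · exact wgeom_sub_wharm_div_le_of_le ha hab hν hτ (by nlinarith)
  · have hsymm (t : ℝ) : (wgeom t a b - wharm t a b) / (t * (1 - t))
        = (wgeom (1 - t) b a - wharm (1 - t) b a) / ((1 - t) * (1 - (1 - t))) := by
      rw [wgeom_one_sub_swap, wharm_one_sub_swap, sub_sub_cancel, mul_comm t]
    rw [hsymm ν, hsymm τ]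
    exact wgeom_sub_wharm_div_le_of_le hb hba.le ⟨by linarith [hν.2], by linarith [hν.1]⟩
      ⟨by linarith [hτ.2], by linarith [hτ.1]⟩ (by nlinarith)
end

section
/- Let a, b > 0 be real numbers and 0 < ν, τ < 1. If (b - a)(τ - ν) ≥ 0, then a #_τ b ≥ (a !_τ b) · ((a #_ν b)/(a !_ν b))^{τ(1-τ)/(ν(1-ν))}. If (b - a)(τ - ν) ≤ 0, then a #_τ b ≤ (a !_τ b) · ((a #_ν b)/(a !_ν b))^{τ(1-τ)/(ν(1-ν))}. -/
/-! Taking logarithms, both inequalities say that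
`φ_t(b) = log ((a #_t b) / (a !_t b)) / (t (1 - t))` increases from `t = ν` to `t = τ` when
`(b - a)(τ - ν) ≥ 0`. For fixed `a`, `∂_b φ_t(b) = (b - a) / (b ((1 - t) b + t a))`, so
`∂_b (φ_τ - φ_ν) = (τ - ν) (b - a)² / (b ((1 - τ) b + τ a) ((1 - ν) b + ν a))` has the sign of
`τ - ν`; as `φ_τ - φ_ν` vanishes at `b = a`, it has the sign of `(τ - ν)(b - a)`. -/

open Real Set

lemma le_of_hasDerivAt_mul_nonneg {f g : ℝ → ℝ} {s : Set ℝ} {c x y : ℝ} (hs : Convex ℝ s)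
    (hf : ∀ z ∈ s, HasDerivAt f (c * g z) z) (hg : ∀ z ∈ s, 0 ≤ g z)
    (hx : x ∈ s) (hy : y ∈ s) (hxy : 0 ≤ (y - x) * c) : f x ≤ f y := by
  have hcont : ContinuousOn f s := fun z hz => (hf z hz).continuousAt.continuousWithinAt
  have hf' : ∀ z ∈ interior s, HasDerivWithinAt f (c * g z) (interior s) z :=
    fun z hz => (hf z (interior_subset hz)).hasDerivWithinAt
  rcases lt_trichotomy x y with hlt | rfl | hgt
  · have hc : 0 ≤ c := nonneg_of_mul_nonneg_right hxy (sub_pos.2 hlt)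
    exact monotoneOn_of_hasDerivWithinAt_nonneg hs hcont hf'
      (fun z hz => mul_nonneg hc (hg z (interior_subset hz))) hx hy hlt.le
  · exact le_rfl
  · have hc : c ≤ 0 := nonpos_of_mul_nonneg_right hxy (sub_neg.2 hgt)
    exact antitoneOn_of_hasDerivWithinAt_nonpos hs hcont hf'
      (fun z hz => mul_nonpos_of_nonpos_of_nonneg hc (hg z (interior_subset hz))) hy hx hgt.le

lemma mul_rpow_div_le_iff {x y z q r : ℝ} (hx : 0 < x) (hy : 0 < y) (hz : 0 < z)
    (hq : 0 < q) : y * x ^ (q / r) ≤ z ↔ log x / r ≤ log (z / y) / q := by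
  rw [← le_div_iff₀' hy, ← log_le_log_iff (by positivity) (by positivity), log_rpow hx,
    le_div_iff₀' hq, mul_comm_div]

lemma le_mul_rpow_div_iff {x y z q r : ℝ} (hx : 0 < x) (hy : 0 < y) (hz : 0 < z)
    (hq : 0 < q) : z ≤ y * x ^ (q / r) ↔ log (z / y) / q ≤ log x / r := by
  rw [← div_le_iff₀' hy, ← log_le_log_iff (by positivity) (by positivity), log_rpow hx,
    div_le_iff₀' hq, mul_comm_div]

section Means

variable {t a b : ℝ}

lemma one_sub_mul_add_mul_pos {x y : ℝ} (ht : t ∈ Icc (0 : ℝ) 1) (hx : 0 < x) (hy : 0 < y) :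
    0 < (1 - t) * x + t * y := by
  rcases ht.1.eq_or_lt with rfl | ht₀
  · simpa using hx
  · have : 0 ≤ 1 - t := sub_nonneg.2 ht.2
    positivity

lemma wharm_denom_pos (ht : t ∈ Icc (0 : ℝ) 1) (ha : 0 < a) (hb : 0 < b) :
    0 < (1 - t) * a⁻¹ + t * b⁻¹ :=
  one_sub_mul_add_mul_pos ht (inv_pos.2 ha) (inv_pos.2 hb)

lemma wharm_pos (ht : t ∈ Icc (0 : ℝ) 1) (ha : 0 < a) (hb : 0 < b) : 0 < wharm t a b :=
  inv_pos.2 (wharm_denom_pos ht ha hb)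

lemma wgeom_pos (ha : 0 < a) (hb : 0 < b) : 0 < wgeom t a b := by
  unfold wgeom; positivity

lemma wgeom_self (ha : 0 < a) : wgeom t a a = a := by
  rw [wgeom, ← rpow_add ha, sub_add_cancel, rpow_one]

lemma wharm_self : wharm t a a = a := by
  rw [wharm, ← add_mul, sub_add_cancel, one_mul, inv_inv]

lemma log_wgeom_div_wharm (ht : t ∈ Icc (0 : ℝ) 1) (ha : 0 < a) (hb : 0 < b) :
    log (wgeom t a b / wharm t a b)
      = (1 - t) * log a + t * log b + log ((1 - t) * a⁻¹ + t * b⁻¹) := by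
  rw [wharm, div_inv_eq_mul, wgeom,
    log_mul (by positivity) (wharm_denom_pos ht ha hb).ne',
    log_mul (by positivity) (by positivity), log_rpow ha, log_rpow hb]

lemma hasDerivAt_log_wgeom_div_wharm (ht : t ∈ Icc (0 : ℝ) 1) (ha : 0 < a) (hb : 0 < b) :
    HasDerivAt (fun b => log (wgeom t a b / wharm t a b))
      (t * (1 - t) * (b - a) / (b * ((1 - t) * b + t * a))) b := by
  have hC := wharm_denom_pos ht ha hb
  have hexplicit : HasDerivAt
      (fun b => (1 - t) * log a + t * log b + log ((1 - t) * a⁻¹ + t * b⁻¹))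
      (t * b⁻¹ + t * (-(b ^ 2)⁻¹) / ((1 - t) * a⁻¹ + t * b⁻¹)) b :=
    (((hasDerivAt_log hb.ne').const_mul t).const_add _).add
      ((((hasDerivAt_inv hb.ne').const_mul t).const_add _).log hC.ne')
  refine (hexplicit.congr_of_eventuallyEq (Filter.eventually_of_mem (Ioi_mem_nhds hb)
    fun x hx => log_wgeom_div_wharm ht ha (mem_Ioi.1 hx))).congr_deriv ?_
  have hCD : (1 - t) * a⁻¹ + t * b⁻¹ = ((1 - t) * b + t * a) / (a * b) := by field_simp
  have hD₀ := (one_sub_mul_add_mul_pos ht hb ha).ne'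
  rw [hCD, eq_comm]
  field_simp
  ring

noncomputable def logGeomHarmRatio (t a b : ℝ) : ℝ :=
  log (wgeom t a b / wharm t a b) / (t * (1 - t))

lemma hasDerivAt_logGeomHarmRatio (ht : t ∈ Ioo (0 : ℝ) 1) (ha : 0 < a) (hb : 0 < b) :
    HasDerivAt (logGeomHarmRatio t a) ((b - a) / (b * ((1 - t) * b + t * a))) b := by
  have ht₀ := ht.1.ne'
  have ht₁ := (sub_pos.2 ht.2).ne'
  refine ((hasDerivAt_log_wgeom_div_wharm (Ioo_subset_Icc_self ht) ha hb).div_const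
    (t * (1 - t))).congr_deriv ?_
  field_simp

end Means

theorem logGeomHarmRatio_le {a b ν τ : ℝ} (ha : 0 < a) (hb : 0 < b)
    (hν : ν ∈ Ioo (0 : ℝ) 1) (hτ : τ ∈ Ioo (0 : ℝ) 1) (h : 0 ≤ (b - a) * (τ - ν)) :
    logGeomHarmRatio ν a b ≤ logGeomHarmRatio τ a b := by
  have hderiv : ∀ x ∈ Ioi (0 : ℝ),
      HasDerivAt (fun x => logGeomHarmRatio τ a x - logGeomHarmRatio ν a x)
        ((τ - ν) * ((x - a) ^ 2 / (x * ((1 - τ) * x + τ * a) * ((1 - ν) * x + ν * a)))) x := by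
    intro x hx
    have hDτ := (one_sub_mul_add_mul_pos (Ioo_subset_Icc_self hτ) hx ha).ne'
    have hDν := (one_sub_mul_add_mul_pos (Ioo_subset_Icc_self hν) hx ha).ne'
    have hx₀ := (mem_Ioi.1 hx).ne'
    refine ((hasDerivAt_logGeomHarmRatio hτ ha hx).sub
      (hasDerivAt_logGeomHarmRatio hν ha hx)).congr_deriv ?_
    rw [div_sub_div _ _ (mul_ne_zero hx₀ hDτ) (mul_ne_zero hx₀ hDν), mul_div_assoc',
      div_eq_div_iff (by positivity) (by positivity)]
    ring
  have hnonneg : ∀ x ∈ Ioi (0 : ℝ),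
      0 ≤ (x - a) ^ 2 / (x * ((1 - τ) * x + τ * a) * ((1 - ν) * x + ν * a)) := fun x hx =>
    div_nonneg (sq_nonneg _) (mul_nonneg (mul_nonneg (le_of_lt hx)
      (one_sub_mul_add_mul_pos (Ioo_subset_Icc_self hτ) hx ha).le)
      (one_sub_mul_add_mul_pos (Ioo_subset_Icc_self hν) hx ha).le)
  have key := le_of_hasDerivAt_mul_nonneg (convex_Ioi 0) hderiv hnonneg ha hb h
  simp only [logGeomHarmRatio, wgeom_self ha, wharm_self, div_self ha.ne', log_one, zero_div,
    sub_self] at key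
  exact sub_nonneg.1 key

theorem stmt_15 (a b ν τ : ℝ) (ha : 0 < a) (hb : 0 < b)
    (hν : ν ∈ Set.Ioo (0 : ℝ) 1) (hτ : τ ∈ Set.Ioo (0 : ℝ) 1) :
    ((b - a) * (τ - ν) ≥ 0 →
      wharm τ a b * (wgeom ν a b / wharm ν a b) ^ (τ * (1 - τ) / (ν * (1 - ν)))
        ≤ wgeom τ a b) ∧
    ((b - a) * (τ - ν) ≤ 0 →
      wgeom τ a b
        ≤ wharm τ a b * (wgeom ν a b / wharm ν a b) ^ (τ * (1 - τ) / (ν * (1 - ν)))) := by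
  have hratio : 0 < wgeom ν a b / wharm ν a b :=
    div_pos (wgeom_pos ha hb) (wharm_pos (Ioo_subset_Icc_self hν) ha hb)
  have hHτ := wharm_pos (Ioo_subset_Icc_self hτ) ha hb
  have hτ₀ : 0 < τ * (1 - τ) := mul_pos hτ.1 (sub_pos.2 hτ.2)
  refine ⟨fun h => ?_, fun h => ?_⟩
  · rw [mul_rpow_div_le_iff hratio hHτ (wgeom_pos ha hb) hτ₀]
    exact logGeomHarmRatio_le ha hb hν hτ h
  · rw [le_mul_rpow_div_iff hratio hHτ (wgeom_pos ha hb) hτ₀]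
    exact logGeomHarmRatio_le ha hb hτ hν (by linarith)
end

section
/- Let A, B be n×n positive definite complex matrices, X an n×n complex matrix, and 0 ≤ t ≤ 1. If (1-t)A⁻¹X + tXB⁻¹ ≠ 0 and (1-t)AX + tXB ≠ 0, then ‖X‖₂² · ‖(1-t)A⁻¹X + tXB⁻¹‖₂⁻¹ ≤ ‖(1-t)AX + tXB‖₂, where ‖·‖₂ denotes the Hilbert–Schmidt (Frobenius) norm. -/
open Matrix ComplexOrder

/-- The Hilbert–Schmidt (Frobenius) norm of a complex matrix:
`‖M‖₂ = (Σ_{i,j} |m_{ij}|²)^{1/2}`. -/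
noncomputable def frobNorm {n : ℕ} (M : Matrix (Fin n) (Fin n) ℂ) : ℝ :=
  Real.sqrt (∑ i, ∑ j, ‖M i j‖ ^ 2)

/-!
Write `L = (1-t) A⁻¹ X + t X B⁻¹` and `M = (1-t) A X + t X B`. By Cauchy–Schwarz for the
Frobenius inner product `⟪P, Q⟫ = tr (Pᴴ Q)` it suffices to show `‖X‖² ≤ Re tr (Lᴴ M)`. Expanding,
`tr (Lᴴ M) = ((1-t)² + t²) ‖X‖² + t (1-t) (tr (Xᴴ A⁻¹ X B) + tr (Xᴴ A X B⁻¹))`.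
Factor `A = Yᴴ Y`, `B = Zᴴ Z` with `Y`, `Z` invertible: the two mixed traces are `‖U‖²` and `‖V‖²`
for `U = Y⁻ᴴ X Zᴴ`, `V = Y X Z⁻¹`, while `⟪U, V⟫ = ‖X‖²`, so `2 Re ⟪U, V⟫ ≤ ‖U‖² + ‖V‖²` bounds
their sum below by `2 ‖X‖²`.
-/

attribute [local instance] Matrix.frobeniusNormedAddCommGroup

namespace Matrix

variable {𝕜 m n : Type*} [RCLike 𝕜] [Fintype m] [Fintype n]

theorem inner_toLp_vec (P Q : Matrix m n 𝕜) :
    inner 𝕜 (WithLp.toLp 2 P.vec) (WithLp.toLp 2 Q.vec) = (Pᴴ * Q).trace := by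
  rw [EuclideanSpace.inner_toLp_toLp, dotProduct_comm, star_vec_dotProduct_vec]

theorem frobenius_norm_eq_norm_toLp_vec (P : Matrix m n 𝕜) :
    ‖P‖ = ‖WithLp.toLp 2 P.vec‖ := by
  rw [frobenius_norm_def, EuclideanSpace.norm_eq, Real.sqrt_eq_rpow, ← Finset.univ_product_univ,
    Finset.sum_product, Finset.sum_comm]
  simp [vec]

theorem re_trace_conjTranspose_mul_self (P : Matrix m n 𝕜) :
    RCLike.re (Pᴴ * P).trace = ‖P‖ ^ 2 := by
  rw [← inner_toLp_vec, frobenius_norm_eq_norm_toLp_vec, inner_self_eq_norm_sq]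

theorem re_trace_conjTranspose_mul_le (P Q : Matrix m n 𝕜) :
    RCLike.re (Pᴴ * Q).trace ≤ ‖P‖ * ‖Q‖ := by
  rw [← inner_toLp_vec, frobenius_norm_eq_norm_toLp_vec, frobenius_norm_eq_norm_toLp_vec]
  exact re_inner_le_norm _ _

theorem two_mul_re_trace_conjTranspose_mul_le (P Q : Matrix m n 𝕜) :
    2 * RCLike.re (Pᴴ * Q).trace ≤ ‖P‖ ^ 2 + ‖Q‖ ^ 2 := by
  have h := norm_sub_sq (𝕜 := 𝕜) (WithLp.toLp 2 P.vec) (WithLp.toLp 2 Q.vec)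
  rw [inner_toLp_vec, ← frobenius_norm_eq_norm_toLp_vec, ← frobenius_norm_eq_norm_toLp_vec] at h
  nlinarith [sq_nonneg ‖WithLp.toLp 2 P.vec - WithLp.toLp 2 Q.vec‖]

open scoped MatrixOrder in
theorem PosDef.exists_isUnit_eq_conjTranspose_mul_self [DecidableEq m] {A : Matrix m m 𝕜}
    (hA : A.PosDef) : ∃ Y : Matrix m m 𝕜, IsUnit Y ∧ A = Yᴴ * Y := by
  obtain ⟨Y, hY, rfl⟩ :=
    CStarAlgebra.isStrictlyPositive_iff_eq_star_mul_self.mp hA.isStrictlyPositive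
  exact ⟨Y, hY, rfl⟩

variable [DecidableEq m] [DecidableEq n]

theorem two_mul_frobenius_norm_sq_le_re_trace {A : Matrix m m 𝕜} {B : Matrix n n 𝕜}
    (hA : A.PosDef) (hB : B.PosDef) (X : Matrix m n 𝕜) :
    2 * ‖X‖ ^ 2 ≤ RCLike.re (Xᴴ * A⁻¹ * X * B).trace + RCLike.re (Xᴴ * A * X * B⁻¹).trace := by
  obtain ⟨Y, hY, rfl⟩ := hA.exists_isUnit_eq_conjTranspose_mul_self
  obtain ⟨Z, hZ, rfl⟩ := hB.exists_isUnit_eq_conjTranspose_mul_self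
  rw [isUnit_iff_isUnit_det] at hY hZ
  set U := Y⁻¹ᴴ * X * Zᴴ
  set V := Y * X * Z⁻¹
  have hUU : (Uᴴ * U).trace = (Xᴴ * (Yᴴ * Y)⁻¹ * X * (Zᴴ * Z)).trace := by
    simp only [U, conjTranspose_mul, conjTranspose_conjTranspose, Matrix.mul_inv_rev,
      conjTranspose_nonsing_inv, Matrix.mul_assoc]
    rw [trace_mul_comm]
    simp only [Matrix.mul_assoc]
  have hVV : (Vᴴ * V).trace = (Xᴴ * (Yᴴ * Y) * X * (Zᴴ * Z)⁻¹).trace := by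
    simp only [V, conjTranspose_mul, Matrix.mul_inv_rev, conjTranspose_nonsing_inv,
      Matrix.mul_assoc]
    rw [trace_mul_comm]
    simp only [Matrix.mul_assoc]
  have hUV : (Uᴴ * V).trace = (Xᴴ * X).trace := by
    simp only [U, V, conjTranspose_mul, conjTranspose_conjTranspose, conjTranspose_nonsing_inv,
      Matrix.mul_assoc, nonsing_inv_mul_cancel_left _ _ hY]
    rw [trace_mul_comm]
    simp only [Matrix.mul_assoc, nonsing_inv_mul_cancel_right _ _ hZ]
  have h := two_mul_re_trace_conjTranspose_mul_le U V
  rwa [← re_trace_conjTranspose_mul_self, ← re_trace_conjTranspose_mul_self, hUU, hVV, hUV,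
    re_trace_conjTranspose_mul_self] at h

theorem trace_conjTranspose_smul_add_smul_mul_smul_add_smul {A : Matrix m m 𝕜}
    {B : Matrix n n 𝕜} (hA : A.PosDef) (hB : B.PosDef) (X : Matrix m n 𝕜) (a b : ℝ) :
    (((a : 𝕜) • (A⁻¹ * X) + (b : 𝕜) • (X * B⁻¹))ᴴ * ((a : 𝕜) • (A * X) + (b : 𝕜) • (X * B))).trace
      = ((a ^ 2 + b ^ 2 : ℝ) : 𝕜) * (Xᴴ * X).trace
        + ((a * b : ℝ) : 𝕜) * ((Xᴴ * A⁻¹ * X * B).trace + (Xᴴ * A * X * B⁻¹).trace) := by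
  have hAd := isUnit_iff_isUnit_det A |>.mp hA.isUnit
  have hBd := isUnit_iff_isUnit_det B |>.mp hB.isUnit
  have hAA : (Xᴴ * A⁻¹ * (A * X)).trace = (Xᴴ * X).trace := by
    rw [Matrix.mul_assoc, nonsing_inv_mul_cancel_left _ _ hAd]
  have hBB : (B⁻¹ * Xᴴ * (X * B)).trace = (Xᴴ * X).trace := by
    rw [trace_mul_comm, Matrix.mul_assoc, mul_nonsing_inv_cancel_left _ _ hBd, trace_mul_comm]
  have hBA : (B⁻¹ * Xᴴ * (A * X)).trace = (Xᴴ * A * X * B⁻¹).trace := by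
    rw [trace_mul_comm]
    simp only [Matrix.mul_assoc]
    rw [trace_mul_comm Xᴴ]
    simp only [Matrix.mul_assoc]
  simp only [conjTranspose_add, conjTranspose_smul, conjTranspose_mul, hA.inv.isHermitian.eq,
    hB.inv.isHermitian.eq, RCLike.star_def, RCLike.conj_ofReal, Matrix.add_mul, Matrix.mul_add,
    Matrix.smul_mul, Matrix.mul_smul, trace_add, trace_smul, smul_eq_mul, hAA, hBB, hBA]
  simp only [Matrix.mul_assoc]
  push_cast
  ring

theorem add_sq_mul_frobenius_norm_sq_le_re_trace {A : Matrix m m 𝕜} {B : Matrix n n 𝕜}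
    (hA : A.PosDef) (hB : B.PosDef) (X : Matrix m n 𝕜) {a b : ℝ} (hab : 0 ≤ a * b) :
    (a + b) ^ 2 * ‖X‖ ^ 2 ≤ RCLike.re (((a : 𝕜) • (A⁻¹ * X) + (b : 𝕜) • (X * B⁻¹))ᴴ *
      ((a : 𝕜) • (A * X) + (b : 𝕜) • (X * B))).trace := by
  rw [trace_conjTranspose_smul_add_smul_mul_smul_add_smul hA hB, map_add, RCLike.re_ofReal_mul,
    RCLike.re_ofReal_mul, map_add, re_trace_conjTranspose_mul_self]
  nlinarith [two_mul_frobenius_norm_sq_le_re_trace hA hB X]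

end Matrix

theorem frobNorm_eq_norm {n : ℕ} (M : Matrix (Fin n) (Fin n) ℂ) : frobNorm M = ‖M‖ := by
  simp [frobNorm, frobenius_norm_def, Real.sqrt_eq_rpow]

theorem stmt_19_general {n : ℕ} (A B X : Matrix (Fin n) (Fin n) ℂ)
    (hA : A.PosDef) (hB : B.PosDef) (t : ℝ) (ht0 : 0 ≤ t) (ht1 : t ≤ 1) :
    frobNorm X ^ 2 * (frobNorm (((1 - t : ℝ) : ℂ) • (A⁻¹ * X) + ((t : ℝ) : ℂ) • (X * B⁻¹)))⁻¹
      ≤ frobNorm (((1 - t : ℝ) : ℂ) • (A * X) + ((t : ℝ) : ℂ) • (X * B)) := by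
  have hX := add_sq_mul_frobenius_norm_sq_le_re_trace hA hB X
    (mul_nonneg (sub_nonneg.2 ht1) ht0)
  rw [sub_add_cancel, one_pow, one_mul] at hX
  simp only [frobNorm_eq_norm, ← div_eq_mul_inv]
  refine div_le_of_le_mul₀ (norm_nonneg _) (norm_nonneg _) ?_
  exact hX.trans ((re_trace_conjTranspose_mul_le _ _).trans_eq (mul_comm _ _))

theorem stmt_19 {n : ℕ} (A B X : Matrix (Fin n) (Fin n) ℂ)
    (hA : A.PosDef) (hB : B.PosDef) (t : ℝ) (ht0 : 0 ≤ t) (ht1 : t ≤ 1)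
    (h1 : ((1 - t : ℝ) : ℂ) • (A⁻¹ * X) + ((t : ℝ) : ℂ) • (X * B⁻¹) ≠ 0)
    (h2 : ((1 - t : ℝ) : ℂ) • (A * X) + ((t : ℝ) : ℂ) • (X * B) ≠ 0) :
    frobNorm X ^ 2 * (frobNorm (((1 - t : ℝ) : ℂ) • (A⁻¹ * X) + ((t : ℝ) : ℂ) • (X * B⁻¹)))⁻¹
      ≤ frobNorm (((1 - t : ℝ) : ℂ) • (A * X) + ((t : ℝ) : ℂ) • (X * B)) :=
  stmt_19_general A B X hA hB t ht0 ht1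
end
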